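/- arXiv:1605.00946 — 2 statements merged into one kernel-verified Lean document; each statement's English description precedes it below -/
import Mathlib

section
/- Let 𝒢=(G,w) be a positive-weighted graph with V(G)={1,...,n} and let i,j be distinct vertices. Then the 2-weight D_{i,j}(𝒢) is indecomposable (i.e. D_{i,j}(𝒢) < D_{i,z}(𝒢)+D_{z,j}(𝒢) for every z ∈ {1,...,n}∖{i,j}) if and only if G contains the edge e(i,j) and e(i,j) is useful. In this case, D_{i,j}(𝒢) is realized only by the path consisting of the single edge e(i,j), and in particular D_{i,j}(𝒢)=w(e(i,j)). -/
/-!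
If `D i j` is indecomposable, a shortest `i`–`j` path has no interior vertex `z`, since it would
split into paths witnessing `D i j ≥ D i z + D z j`; so it is the edge `e(i,j)`, which is then
useful for the pair `(i, j)`. Conversely, if `D i z + D z j ≤ D i j ≤ w e(i,j)`, shortest paths
`i`–`z` and `z`–`j` are each lighter than `e(i,j)`, hence avoid it, and together they form a
detour that can replace `e(i,j)` in every shortest path, so `e(i,j)` is not useful.
-/

open SimpleGraph

variable {V : Type*}

/-- weight of a walk: sum of the weights of its edges -/
noncomputable def walkWeight (G : SimpleGraph V) (w : Sym2 V → ℝ) {i j : V} (p : G.Walk i j) : ℝ :=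
  (p.edges.map w).sum

/-- the 2-weight: min over paths joining i and j -/
noncomputable def wdist (G : SimpleGraph V) (w : Sym2 V → ℝ) (i j : V) : ℝ :=
  sInf {x : ℝ | ∃ p : G.Walk i j, p.IsPath ∧ walkWeight G w p = x}

def Realizes (G : SimpleGraph V) (w : Sym2 V → ℝ) {i j : V} (p : G.Walk i j) : Prop :=
  p.IsPath ∧ walkWeight G w p = wdist G w i j

def UsefulEdge (G : SimpleGraph V) (w : Sym2 V → ℝ) (e : Sym2 V) : Prop :=
  ∃ a b : V, a ≠ b ∧ ∀ p : G.Walk a b, Realizes G w p → e ∈ p.edges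

def Pruned (G : SimpleGraph V) (w : Sym2 V → ℝ) : Prop :=
  ∀ e ∈ G.edgeSet, UsefulEdge G w e

def PosWeights (G : SimpleGraph V) (w : Sym2 V → ℝ) : Prop :=
  ∀ e ∈ G.edgeSet, 0 < w e

def Indec (G : SimpleGraph V) (w : Sym2 V → ℝ) (i j : V) : Prop :=
  ∀ z : V, z ≠ i → z ≠ j → wdist G w i j < wdist G w i z + wdist G w z j

def IsLeaf (G : SimpleGraph V) (v : V) : Prop := (G.neighborSet v).ncard = 1

def IsSnake (G : SimpleGraph V) : Prop :=
  G.IsTree ∧ {v : V | IsLeaf G v}.ncard = 2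

def IsCaterpillar (G : SimpleGraph V) : Prop :=
  G.IsTree ∧ ∃ (x₁ x₂ : V) (p : G.Walk x₁ x₂), p.IsPath ∧
    {v : V | v ∈ p.support} = {v : V | 2 ≤ (G.neighborSet v).ncard}

def IsPolygon {n : ℕ} [NeZero n] (G : SimpleGraph (Fin n)) : Prop :=
  ∃ σ : Equiv.Perm (Fin n), G.edgeSet = Set.range (fun i : Fin n => s(σ i, σ (i + 1)))

noncomputable def tmin (G : SimpleGraph V) (w : Sym2 V → ℝ) (x : V) : ℝ :=
  (1 / 2) * sInf {r : ℝ | ∃ y z : V, y ≠ x ∧ z ≠ x ∧ y ≠ z ∧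
    r = wdist G w x y + wdist G w x z - wdist G w y z}

def IsBipartiteOn (G : SimpleGraph V) (X Y : Set V) : Prop :=
  X ∩ Y = ∅ ∧ X ∪ Y = Set.univ ∧ ∀ a b : V, G.Adj a b → (a ∈ X ∧ b ∈ Y) ∨ (a ∈ Y ∧ b ∈ X)

noncomputable def chainSum {α : Type*} (D : α → α → ℝ) : List α → ℝ
  | [] => 0
  | [_] => 0
  | a :: b :: l => D a b + chainSum D (b :: l)

def FIndec {n : ℕ} (D : Fin n → Fin n → ℝ) (i j : Fin n) : Prop :=
  ∀ z : Fin n, z ≠ i → z ≠ j → D i j < D i z + D z j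

def TriangleIneq {n : ℕ} (D : Fin n → Fin n → ℝ) : Prop :=
  ∀ i j k : Fin n, i ≠ j → j ≠ k → i ≠ k → D i j ≤ D i k + D k j

def MaxTwice (x y z : ℝ) : Prop :=
  (x = y ∧ z ≤ x) ∨ (x = z ∧ y ≤ x) ∨ (y = z ∧ x ≤ y)

def FourPoint {n : ℕ} (D : Fin n → Fin n → ℝ) : Prop :=
  ∀ i j k h : Fin n, i ≠ j → i ≠ k → i ≠ h → j ≠ k → j ≠ h → k ≠ h →
    MaxTwice (D i j + D k h) (D i k + D j h) (D i h + D k j)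

def MedianFamily {n : ℕ} (D : Fin n → Fin n → ℝ) : Prop :=
  ∀ a b c : Fin n, ∃! m : Fin n,
    ∀ i ∈ ({a, b, c} : Set (Fin n)), ∀ j ∈ ({a, b, c} : Set (Fin n)), i ≠ j →
      D i j = D i m + D j m

noncomputable def tminF {n : ℕ} (D : Fin n → Fin n → ℝ) (x : Fin n) : ℝ :=
  (1 / 2) * sInf {r : ℝ | ∃ y z : Fin n, y ≠ x ∧ z ≠ x ∧ y ≠ z ∧ r = D x y + D x z - D y z}

def interiorSet {G : SimpleGraph V} {u v : V} (p : G.Walk u v) : Set V :=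
  {x : V | x ∈ p.support ∧ x ≠ u ∧ x ≠ v}


section WeightedGraph

variable {G : SimpleGraph V} {w : Sym2 V → ℝ}

@[simp]
lemma walkWeight_append {a b c : V} (p : G.Walk a b) (q : G.Walk b c) :
    walkWeight G w (p.append q) = walkWeight G w p + walkWeight G w q := by
  simp [walkWeight, Walk.edges_append]

@[simp]
lemma walkWeight_reverse {a b : V} (p : G.Walk a b) :
    walkWeight G w p.reverse = walkWeight G w p := by
  simp [walkWeight, Walk.edges_reverse, List.sum_reverse]

lemma PosWeights.nonneg_of_mem_map_edges (hw : PosWeights G w) {a b : V} (p : G.Walk a b) :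
    ∀ x ∈ p.edges.map w, 0 ≤ x := by
  simp only [List.mem_map, forall_exists_index, and_imp]
  rintro _ e he rfl
  exact (hw e (p.edges_subset_edgeSet he)).le

lemma PosWeights.le_walkWeight_of_mem_edges (hw : PosWeights G w) {a b : V} (p : G.Walk a b)
    {e : Sym2 V} (he : e ∈ p.edges) : w e ≤ walkWeight G w p :=
  List.single_le_sum (hw.nonneg_of_mem_map_edges p) _ (List.mem_map_of_mem he)

lemma PosWeights.walkWeight_pos (hw : PosWeights G w) {a b : V} (hab : a ≠ b) (p : G.Walk a b) :
    0 < walkWeight G w p := by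
  cases p with
  | nil => exact absurd rfl hab
  | cons h q =>
    exact (hw s(a, _) h).trans_le (hw.le_walkWeight_of_mem_edges _ (by simp))

lemma PosWeights.walkWeight_bypass_le [DecidableEq V] (hw : PosWeights G w) {a b : V}
    (p : G.Walk a b) : walkWeight G w p.bypass ≤ walkWeight G w p :=
  ((p.edges_bypass_sublist_edges).map w).sum_le_sum (hw.nonneg_of_mem_map_edges p)

lemma PosWeights.wdist_le_walkWeight (hw : PosWeights G w) {a b : V} (p : G.Walk a b) :
    wdist G w a b ≤ walkWeight G w p := by
  classical
  have hbdd : BddBelow {x : ℝ | ∃ q : G.Walk a b, q.IsPath ∧ walkWeight G w q = x} :=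
    ⟨0, by rintro _ ⟨q, -, rfl⟩; exact List.sum_nonneg (hw.nonneg_of_mem_map_edges q)⟩
  exact (csInf_le hbdd ⟨p.bypass, p.bypass_isPath, rfl⟩).trans (hw.walkWeight_bypass_le p)

lemma PosWeights.wdist_le_of_adj (hw : PosWeights G w) {a b : V} (h : G.Adj a b) :
    wdist G w a b ≤ w s(a, b) := by
  simpa [walkWeight] using hw.wdist_le_walkWeight h.toWalk

lemma exists_realizes_of_reachable [Finite V] {a b : V} (h : G.Reachable a b) :
    ∃ p : G.Walk a b, Realizes G w p := by
  classical
  have : Fintype V := Fintype.ofFinite V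
  have hfin : {x : ℝ | ∃ p : G.Walk a b, p.IsPath ∧ walkWeight G w p = x}.Finite := by
    refine (Set.finite_range fun q : G.Path a b => walkWeight G w q.1).subset ?_
    rintro _ ⟨p, hp, rfl⟩
    exact ⟨⟨p, hp⟩, rfl⟩
  obtain ⟨p⟩ := h
  have hne : {x : ℝ | ∃ p : G.Walk a b, p.IsPath ∧ walkWeight G w p = x}.Nonempty :=
    ⟨_, p.bypass, p.bypass_isPath, rfl⟩
  obtain ⟨q, hq, hqw⟩ := hne.csInf_mem hfin
  exact ⟨q, hq, hqw⟩

lemma PosWeights.wdist_pos [Finite V] (hw : PosWeights G w) {a b : V} (h : G.Reachable a b)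
    (hab : a ≠ b) : 0 < wdist G w a b := by
  obtain ⟨p, -, hp⟩ := exists_realizes_of_reachable (w := w) h
  exact hp ▸ hw.walkWeight_pos hab p

lemma SimpleGraph.Walk.exists_edges_eq_append_cons {a b : V} (p : G.Walk a b) {e : Sym2 V}
    (he : e ∈ p.edges) :
    ∃ (c d : V) (p₁ : G.Walk a c) (p₂ : G.Walk d b),
      s(c, d) = e ∧ p.edges = p₁.edges ++ e :: p₂.edges := by
  induction p with
  | nil => simp at he
  | cons h q ih =>
    rcases List.mem_cons.1 (Walk.edges_cons h q ▸ he) with rfl | he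
    · exact ⟨_, _, Walk.nil, q, rfl, by simp⟩
    · obtain ⟨c, d, p₁, p₂, hs, hedges⟩ := ih he
      exact ⟨c, d, Walk.cons h p₁, p₂, hs, by simp [hedges]⟩

lemma SimpleGraph.Walk.IsTrail.exists_replace_edge {a b u v : V} {p : G.Walk a b}
    (hp : p.IsTrail) (he : s(u, v) ∈ p.edges) (m : G.Walk u v) :
    ∃ r : G.Walk a b, walkWeight G w r = walkWeight G w p - w s(u, v) + walkWeight G w m ∧
      (s(u, v) ∈ r.edges → s(u, v) ∈ m.edges) := by
  obtain ⟨c, d, p₁, p₂, hs, hedges⟩ := p.exists_edges_eq_append_cons he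
  have hnodup := hp.edges_nodup
  rw [hedges, List.nodup_append] at hnodup
  obtain ⟨-, hn₂, hdisj⟩ := hnodup
  have hn₁ : s(u, v) ∉ p₁.edges := fun h => hdisj _ h _ List.mem_cons_self rfl
  have hn₂ : s(u, v) ∉ p₂.edges := (List.nodup_cons.1 hn₂).1
  have hwp : walkWeight G w p = walkWeight G w p₁ + w s(u, v) + walkWeight G w p₂ := by
    simp only [walkWeight, hedges, List.map_append, List.map_cons, List.sum_append,
      List.sum_cons]
    ring
  have reroute : ∀ m' : G.Walk c d, walkWeight G w m' = walkWeight G w m →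
      (s(u, v) ∈ m'.edges → s(u, v) ∈ m.edges) →
      ∃ r : G.Walk a b, walkWeight G w r = walkWeight G w p - w s(u, v) + walkWeight G w m ∧
        (s(u, v) ∈ r.edges → s(u, v) ∈ m.edges) := by
    intro m' hm'w hm'e
    refine ⟨p₁.append (m'.append p₂), by simp only [walkWeight_append]; linarith, ?_⟩
    simp only [Walk.edges_append, List.mem_append]
    rintro (h | h | h)
    exacts [absurd h hn₁, hm'e h, absurd h hn₂]
  rcases Sym2.eq_iff.1 hs with ⟨rfl, rfl⟩ | ⟨rfl, rfl⟩
  · exact reroute m rfl id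
  · exact reroute m.reverse (walkWeight_reverse m) (by simp [Sym2.eq_swap])

/-- Rerouting a shortest path through the detour yields a shortest path avoiding the edge. -/
lemma PosWeights.not_usefulEdge_of_detour [Finite V] (hw : PosWeights G w)
    (hconn : G.Preconnected) {u v : V} (m : G.Walk u v) (hm : s(u, v) ∉ m.edges)
    (hle : walkWeight G w m ≤ w s(u, v)) : ¬ UsefulEdge G w s(u, v) := by
  classical
  rintro ⟨a, b, -, huse⟩
  obtain ⟨p, hp⟩ := exists_realizes_of_reachable (w := w) (hconn a b)
  obtain ⟨r, hrw, hre⟩ := hp.1.isTrail.exists_replace_edge (huse p hp) m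
  have hr : walkWeight G w r.bypass ≤ wdist G w a b := by
    have := hw.walkWeight_bypass_le r
    linarith [hp.2]
  have hreal : Realizes G w r.bypass :=
    ⟨r.bypass_isPath, hr.antisymm (hw.wdist_le_walkWeight _)⟩
  exact hm (hre (r.edges_bypass_subset_edges (huse _ hreal)))

lemma PosWeights.indec_of_usefulEdge [Finite V] (hw : PosWeights G w)
    (hconn : G.Preconnected) {i j : V} (hadj : G.Adj i j) (huse : UsefulEdge G w s(i, j)) :
    Indec G w i j := by
  intro z hzi hzj
  by_contra! hle
  replace hle := hle.trans (hw.wdist_le_of_adj hadj)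
  have hiz := hw.wdist_pos (hconn i z) hzi.symm
  have hzj := hw.wdist_pos (hconn z j) hzj
  obtain ⟨q₁, -, hq₁⟩ := exists_realizes_of_reachable (w := w) (hconn i z)
  obtain ⟨q₂, -, hq₂⟩ := exists_realizes_of_reachable (w := w) (hconn z j)
  have hn₁ : s(i, j) ∉ q₁.edges := fun h => by
    linarith [hw.le_walkWeight_of_mem_edges q₁ h]
  have hn₂ : s(i, j) ∉ q₂.edges := fun h => by
    linarith [hw.le_walkWeight_of_mem_edges q₂ h]
  refine hw.not_usefulEdge_of_detour hconn (q₁.append q₂) ?_ (by simpa [hq₁, hq₂] using hle)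
    huse
  simpa [Walk.edges_append] using ⟨hn₁, hn₂⟩

lemma PosWeights.edges_eq_of_indec_of_realizes (hw : PosWeights G w) {i j : V} (hij : i ≠ j)
    (hind : Indec G w i j) {q : G.Walk i j} (hq : Realizes G w q) : q.edges = [s(i, j)] := by
  cases q with
  | nil => exact absurd rfl hij
  | @cons _ x _ h q' =>
    by_cases hxj : x = j
    · subst hxj
      simp [Walk.isPath_iff_nil.1 hq.1.of_cons]
    · have hsplit : wdist G w i j = w s(i, x) + walkWeight G w q' := by
        rw [← hq.2]; simp [walkWeight]
      have := hind x h.ne' hxj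
      linarith [hw.wdist_le_of_adj h, hw.wdist_le_walkWeight q']

end WeightedGraph

/-- `D i j` is indecomposable iff `e(i,j)` is an edge of `G` and it is useful; in this case
`D i j` is realized only by the path consisting of the single edge `e(i,j)`, and
`D i j = w (e(i,j))`. -/
theorem stmt_1 {n : ℕ} (G : SimpleGraph (Fin n)) (hconn : G.Connected)
    (w : Sym2 (Fin n) → ℝ) (hw : PosWeights G w) (i j : Fin n) (hij : i ≠ j) :
    (Indec G w i j ↔ s(i, j) ∈ G.edgeSet ∧ UsefulEdge G w s(i, j)) ∧
    (Indec G w i j →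
      (∀ q : G.Walk i j, Realizes G w q → q.edges = [s(i, j)]) ∧
        wdist G w i j = w s(i, j)) := by
  obtain ⟨p, hp⟩ := exists_realizes_of_reachable (w := w) (hconn.preconnected i j)
  have hsingle : Indec G w i j → ∀ q : G.Walk i j, Realizes G w q → q.edges = [s(i, j)] :=
    fun hind _ hq => hw.edges_eq_of_indec_of_realizes hij hind hq
  refine ⟨⟨fun hind => ⟨?_, i, j, hij, fun q hq => ?_⟩, fun ⟨hadj, huse⟩ => ?_⟩,
    fun hind => ⟨hsingle hind, ?_⟩⟩
  · exact p.edges_subset_edgeSet (by simp [hsingle hind p hp])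
  · simp [hsingle hind q hq]
  · exact hw.indec_of_usefulEdge hconn.preconnected hadj huse
  · rw [← hp.2, walkWeight, hsingle hind p hp]
    simp
end

section
/- Let {D_I}_{I∈({1,...,n} choose 2)} be a family of positive real numbers satisfying the triangle inequalities. There exists a pruned positive-weighted polygon 𝒫=(P,w) with V(P)={1,...,n} such that D_{i,j}(𝒫)=D_{i,j} for all distinct i,j if and only if: (i) for every i ∈ [n] there are exactly two elements x,y ∈ [n]∖{i} such that D_{i,x} and D_{i,y} are indecomposable; and (ii) there exists a bijection σ of {1,...,n} such that, writing D'_{i,j}=D_{σ(i),σ(j)}, the pairs {i,i+1} for 1≤i≤n−1 and the pair {1,n} have D' indecomposable, and for all 1 ≤ a < b ≤ n, D'_{a,b} = min{ Σ_{i=a}^{b−1} D'_{i,i+1}, Σ_{i=b}^{n−1} D'_{i,i+1} + D'_{1,n} + Σ_{i=1}^{a−1} D'_{i,i+1} }. -/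
open SimpleGraph

variable {V : Type*}

namespace Stmt7

open Fin.CommRing

variable {n : ℕ} [NeZero n]

/- ### Fin arithmetic helpers -/

omit [NeZero n] in
lemma val_sub' (a b : Fin n) :
    (a - b).val = if b.val ≤ a.val then a.val - b.val else a.val + n - b.val := by
  rw [Fin.sub_def]
  show (n - b.val + a.val) % n = _
  have hb := b.isLt; have ha := a.isLt
  rcases le_or_gt b.val a.val with h | h
  · rw [if_pos h]
    have e : n - b.val + a.val = (a.val - b.val) + n := by omega
    rw [e, Nat.add_mod_right, Nat.mod_eq_of_lt (by omega)]
  · rw [if_neg (by omega), Nat.mod_eq_of_lt (by omega)]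
    omega

omit [NeZero n] in
lemma val_add' (a b : Fin n) :
    (a + b).val = if a.val + b.val < n then a.val + b.val else a.val + b.val - n := by
  rw [Fin.val_add]
  have hb := b.isLt; have ha := a.isLt
  rcases lt_or_ge (a.val + b.val) n with h | h
  · rw [if_pos h, Nat.mod_eq_of_lt h]
  · rw [if_neg (by omega)]
    have e : a.val + b.val = (a.val + b.val - n) + n := by omega
    rw [e, Nat.add_mod_right, Nat.mod_eq_of_lt (by omega)]
    omega

lemma val_zero' : (0 : Fin n).val = 0 := rfl

variable (hn : 3 ≤ n)
include hn

lemma val_one3 : (1 : Fin n).val = 1 := by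
  rw [Fin.val_one']; exact Nat.mod_eq_of_lt (by omega)

lemma val_two3 : (2 : Fin n).val = 2 := by
  have h2 : (2 : Fin n) = 1 + 1 := by norm_num
  rw [h2, val_add', val_one3 hn, if_pos (by omega)]

lemma one_ne_zero3 : (1 : Fin n) ≠ 0 := by
  intro h; have := congrArg Fin.val h; rw [val_one3 hn, val_zero'] at this; omega

lemma two_ne_zero3 : (2 : Fin n) ≠ 0 := by
  intro h; have := congrArg Fin.val h; rw [val_two3 hn, val_zero'] at this; omega

omit hn in
lemma fin_val_ne_zero {x : Fin n} (hx : x ≠ 0) : x.val ≠ 0 :=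
  fun h => hx (Fin.ext (by rw [h, val_zero']))

lemma add_one_ne (a : Fin n) : a + 1 ≠ a := by
  intro h
  have h1 : (1 : Fin n) = 0 := by
    have := congrArg (· - a) h
    simpa [add_comm, add_sub_cancel_right, sub_self] using this
  exact one_ne_zero3 hn h1

lemma sub_one_val {x : Fin n} (hx : x ≠ 0) : (x - 1).val = x.val - 1 := by
  rw [val_sub', val_one3 hn, if_pos (by have := fin_val_ne_zero hx; omega)]

lemma val_add_one {x : Fin n} (h : x + 1 ≠ 0) : (x + 1).val = x.val + 1 := by
  rw [val_add', val_one3 hn]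
  rcases lt_or_ge (x.val + 1) n with hlt | hge
  · rw [if_pos hlt]
  · exfalso; apply h; apply Fin.ext
    rw [val_add', val_one3 hn, if_neg (by omega), val_zero']
    have := x.isLt; omega

lemma neg_val {x : Fin n} (hx : x ≠ 0) : (-x).val = n - x.val := by
  have h0 : -x = 0 - x := by ring
  rw [h0, val_sub', val_zero', if_neg (by have := fin_val_ne_zero hx; omega)]
  omega

omit hn in
lemma val_sub_ne_zero {a b : Fin n} (h : a ≠ b) : (a - b).val ≠ 0 :=
  fin_val_ne_zero (sub_ne_zero.2 h)

/- ### the cycle structure -/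

def edgeAt (σ : Fin n → Fin n) (i : Fin n) : Sym2 (Fin n) := s(σ i, σ (i+1))

structure Good (G : SimpleGraph (Fin n)) (σ : Fin n → Fin n) : Prop where
  inj : Function.Injective σ
  adj : ∀ a c, G.Adj (σ a) c ↔ c = σ (a + 1) ∨ c = σ (a - 1)

variable {G : SimpleGraph (Fin n)} {σ : Fin n → Fin n}

omit hn

def nsig (σ : Fin n → Fin n) : Fin n → Fin n := fun i => σ (-i)

lemma Good.adj_up (h : Good G σ) (a : Fin n) : G.Adj (σ a) (σ (a+1)) :=
  (h.adj a _).2 (Or.inl rfl)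

lemma Good.neg (h : Good G σ) : Good G (nsig σ) where
  inj := fun x y hxy => by
    have := h.inj hxy; simpa using congrArg Neg.neg this
  adj := fun a c => by
    have hh := h.adj (-a) c
    unfold nsig
    rw [hh]
    constructor
    · rintro (h1 | h1)
      · right; rw [h1]; congr 1; ring
      · left; rw [h1]; congr 1; ring
    · rintro (h1 | h1)
      · right; rw [h1]; congr 1; ring
      · left; rw [h1]; congr 1; ring

/-- walk going `k` steps "up" from `σ a` -/
def upWalk (h : Good G σ) : (k : ℕ) → (a : Fin n) → G.Walk (σ a) (σ (a + (k : Fin n)))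
  | 0, a => Walk.nil.copy rfl (congrArg σ (by norm_num))
  | (k+1), a => Walk.cons (h.adj_up a)
      ((upWalk h k (a+1)).copy rfl (congrArg σ (by push_cast; ring)))

lemma edges_upWalk (h : Good G σ) (k : ℕ) (a : Fin n) :
    (upWalk h k a).edges = (List.range k).map (fun i : ℕ => edgeAt σ (a + (i : Fin n))) := by
  induction k generalizing a with
  | zero => rw [upWalk]; simp
  | succ k ih =>
    rw [upWalk, Walk.edges_cons, Walk.edges_copy, ih, List.range_succ_eq_map]
    simp only [List.map_cons, List.map_map]
    congr 1
    · simp [edgeAt]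
    · apply List.map_congr_left
      intro i _
      show edgeAt σ _ = edgeAt σ _
      congr 1
      push_cast; ring

lemma support_upWalk (h : Good G σ) (k : ℕ) (a : Fin n) :
    (upWalk h k a).support = (List.range (k+1)).map (fun i : ℕ => σ (a + (i : Fin n))) := by
  induction k generalizing a with
  | zero => rw [upWalk]; simp [List.range_succ]
  | succ k ih =>
    rw [upWalk, Walk.support_cons, Walk.support_copy, ih, List.range_succ_eq_map (n := k+1)]
    simp only [List.map_cons, List.map_map]
    congr 1
    · norm_num
    · apply List.map_congr_left
      intro i _
      show σ _ = σ _
      congr 1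
      push_cast; ring

lemma cast_add_inj {a : Fin n} {x y : ℕ} (hx : x < n) (hy : y < n)
    (hσ : Function.Injective σ) (h : σ (a + (x:Fin n)) = σ (a + (y:Fin n))) : x = y := by
  have h1 := hσ h
  have h2 : ((x : Fin n)) = (y : Fin n) := by
    have := congrArg (· - a) h1
    simpa [add_comm, add_sub_cancel] using this
  have := congrArg Fin.val h2
  rwa [Fin.val_cast_of_lt hx, Fin.val_cast_of_lt hy] at this

lemma isPath_upWalk (h : Good G σ) {k : ℕ} (hk : k < n) (a : Fin n) :
    (upWalk h k a).IsPath := by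
  rw [Walk.isPath_def, support_upWalk]
  refine List.Nodup.map_on ?_ (List.nodup_range)
  intro x hx y hy hxy
  rw [List.mem_range] at hx hy
  exact cast_add_inj (by omega) (by omega) h.inj hxy

/-- the "up arc" from `σ a` to `σ b` -/
def arc (h : Good G σ) (a b : Fin n) : G.Walk (σ a) (σ b) :=
  (upWalk h ((b - a).val) a).copy rfl
    (congrArg σ (by rw [Fin.cast_val_eq_self]; ring))

lemma isPath_arc (h : Good G σ) (a b : Fin n) : (arc h a b).IsPath := by
  rw [arc, Walk.isPath_copy]
  exact isPath_upWalk h (b - a).isLt a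

lemma edges_arc (h : Good G σ) (a b : Fin n) :
    (arc h a b).edges = (List.range ((b-a).val)).map (fun i : ℕ => edgeAt σ (a + (i : Fin n))) := by
  rw [arc, Walk.edges_copy, edges_upWalk]

/- ### arc index sets -/

def arcSet (a b : Fin n) : Finset (Fin n) :=
  (Finset.range ((b - a).val)).image (fun i : ℕ => a + (i : Fin n))

lemma mem_arcSet {a b x : Fin n} : x ∈ arcSet a b ↔ (x - a).val < (b - a).val := by
  constructor
  · rintro hx
    obtain ⟨i, hi, rfl⟩ := Finset.mem_image.1 hx
    rw [Finset.mem_range] at hi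
    have h1 : a + (i:Fin n) - a = (i:Fin n) := by ring
    rw [h1, Fin.val_cast_of_lt (lt_of_lt_of_le hi (le_of_lt (b-a).isLt))]
    exact hi
  · intro hx
    refine Finset.mem_image.2 ⟨(x - a).val, Finset.mem_range.2 hx, ?_⟩
    rw [Fin.cast_val_eq_self]; ring

omit [NeZero n] in
lemma list_sum_range (f : ℕ → ℝ) (k : ℕ) :
    ((List.range k).map f).sum = ∑ i ∈ Finset.range k, f i := by
  induction k with
  | zero => simp
  | succ k ih => rw [Finset.sum_range_succ, List.range_succ, List.map_append, List.sum_append, ih]; simp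

lemma weight_arc (h : Good G σ) (w : Sym2 (Fin n) → ℝ) (a b : Fin n) :
    walkWeight G w (arc h a b) = ∑ i ∈ arcSet a b, w (edgeAt σ i) := by
  rw [walkWeight, edges_arc, arcSet, Finset.sum_image, List.map_map]
  · rw [list_sum_range (w ∘ fun i : ℕ => edgeAt σ (a + (i:Fin n)))]
    simp [Function.comp]
  · intro x hx y hy hxy
    rw [Finset.coe_range, Set.mem_Iio] at hx hy
    have hb := (b-a).isLt
    exact cast_add_inj (by omega) (by omega) h.inj (congrArg σ hxy)

-- ### NEW PART

include hn in
lemma arcSet_compl {a b : Fin n} (hab : a ≠ b) :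
    Finset.univ \ arcSet a b = arcSet b a := by
  ext x
  simp only [Finset.mem_sdiff, Finset.mem_univ, true_and, mem_arcSet, not_lt]
  have h1 : x - a = (x - b) + (b - a) := by ring
  have h2 : a - b = -(b - a) := by ring
  rw [h1, h2, val_add', neg_val hn (sub_ne_zero.2 (Ne.symm hab))]
  have hd := val_sub_ne_zero (Ne.symm hab)
  have h3 := (x-b).isLt; have h4 := (b-a).isLt
  split_ifs <;> omega

lemma arcSet_concat {a b c : Fin n} (hcond : (b-a).val + (c-b).val = (c-a).val) :
    Disjoint (arcSet a b) (arcSet b c) ∧ arcSet a c = arcSet a b ∪ arcSet b c := by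
  have key : ∀ x : Fin n, (x ∈ arcSet b c ↔ (b-a).val ≤ (x-a).val ∧ (x-a).val < (c-a).val) := by
    intro x
    rw [mem_arcSet]
    have h1 : x - b = (x - a) - (b - a) := by ring
    rw [h1, val_sub']
    have h3 := (x-a).isLt; have h4 := (b-a).isLt; have h5 := (c-a).isLt
    split_ifs <;> omega
  constructor
  · rw [Finset.disjoint_left]
    intro x hx1 hx2
    rw [mem_arcSet] at hx1
    rw [key] at hx2
    omega
  · ext x
    rw [Finset.mem_union, mem_arcSet, mem_arcSet, key]
    omega

lemma sum_concat (f : Fin n → ℝ) {a b c : Fin n}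
    (hcond : (b-a).val + (c-b).val = (c-a).val) :
    ∑ i ∈ arcSet a c, f i = ∑ i ∈ arcSet a b, f i + ∑ i ∈ arcSet b c, f i := by
  obtain ⟨hd, hu⟩ := arcSet_concat hcond
  rw [hu, Finset.sum_union hd]

include hn in
lemma arcSet_singleton (a : Fin n) : arcSet a (a+1) = {a} := by
  ext x
  rw [mem_arcSet, Finset.mem_singleton]
  have h1 : a + 1 - a = 1 := by ring
  rw [h1, val_one3 hn]
  constructor
  · intro hx
    have h2 : (x - a).val = 0 := by omega
    have h3 : x - a = 0 := Fin.ext (by rw [h2, val_zero'])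
    have := congrArg (· + a) h3
    simpa [sub_add_cancel] using this
  · rintro rfl
    rw [sub_self, val_zero']; omega

lemma self_mem_arcSet {a b : Fin n} (hab : a ≠ b) : a ∈ arcSet a b := by
  rw [mem_arcSet, sub_self, val_zero']
  exact Nat.pos_of_ne_zero (val_sub_ne_zero (Ne.symm hab))

lemma arcSet_eq_Ico {a b : Fin n} (hab : a < b) : arcSet a b = Finset.Ico a b := by
  ext x
  rw [mem_arcSet, Finset.mem_Ico, Fin.le_def, Fin.lt_def]
  rw [Fin.lt_def] at hab
  have h3 := x.isLt; have h4 := a.isLt; have h5 := b.isLt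
  rw [val_sub', val_sub']
  split_ifs <;> omega

lemma edgeAt_nsig (j : Fin n) : edgeAt (nsig σ) j = edgeAt σ (-j-1) := by
  show s(σ (-j), σ (-(j+1))) = s(σ (-j-1), σ (-j-1+1))
  have e2 : (-j-1+1 : Fin n) = -j := by ring
  have e1 : (-(j+1) : Fin n) = -j-1 := by ring
  rw [e2, e1]
  exact Sym2.eq_swap

include hn in
lemma val_lt_iff_of_add {u v d : Fin n} (hd0 : d ≠ 0) (key : u + v = d - 1) :
    (u.val < d.val ↔ v.val < d.val) := by
  have h3 := sub_one_val hn hd0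
  have h4 : (u + v).val = (d-1).val := by rw [key]
  rw [val_add', h3] at h4
  have h5 := u.isLt; have h6 := v.isLt; have h7 := d.isLt
  have h8 := fin_val_ne_zero hd0
  split_ifs at h4 <;> omega

include hn in
lemma mem_arcSet_neg {a b j : Fin n} (hab : a ≠ b) :
    j ∈ arcSet (-a) (-b) ↔ (-j-1) ∈ arcSet b a := by
  rw [mem_arcSet, mem_arcSet]
  have h1 : -b - -a = a - b := by ring
  have h2 : j - -a = j + a := by ring
  rw [h1, h2]
  exact val_lt_iff_of_add hn (sub_ne_zero.2 hab) (by ring)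

include hn in
lemma edges_arc_cons (h : Good G σ) {a b : Fin n} (hab : a ≠ b) :
    (arc h a b).edges = edgeAt σ a :: (arc h (a+1) b).edges := by
  rw [edges_arc, edges_arc]
  obtain ⟨m, hm'⟩ : ∃ m, (b-a).val = m + 1 :=
    ⟨(b-a).val - 1, by have := val_sub_ne_zero (Ne.symm hab); omega⟩
  have hm : (b - (a+1)).val = m := by
    have h1 : b - (a+1) = (b - a) - 1 := by ring
    rw [h1, sub_one_val hn (sub_ne_zero.2 (Ne.symm hab)), hm']
    omega
  rw [hm, hm', List.range_succ_eq_map]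
  simp only [List.map_cons, List.map_map]
  congr 1
  · simp [edgeAt]
  · apply List.map_congr_left
    intro i _
    show edgeAt σ _ = edgeAt σ _
    congr 1
    push_cast; ring

include hn in
lemma eq_arc_edges_of_avoid (h : Good G σ) :
    ∀ (k : ℕ) {a b : Fin n}, a ≠ b → ∀ (p : G.Walk (σ a) (σ b)),
      p.length ≤ k → p.IsPath → σ (a - 1) ∉ p.support.tail →
      p.edges = (arc h a b).edges := by
  intro k
  induction k with
  | zero =>
    intro a b hab p hlen hp hav
    obtain ⟨c, hadjc, q, rfl⟩ := Walk.exists_eq_cons_of_ne (fun hh => hab (h.inj hh)) p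
    simp at hlen
  | succ k ih =>
    intro a b hab p hlen hp hav
    obtain ⟨c, hadjc, q, rfl⟩ := Walk.exists_eq_cons_of_ne (fun hh => hab (h.inj hh)) p
    rw [Walk.cons_isPath_iff] at hp
    rcases (h.adj a c).1 hadjc with hc | hc
    · subst hc
      by_cases hb : a + 1 = b
      · subst hb
        have hq : q = Walk.nil := (Walk.isPath_iff_eq_nil (p := q)).1 hp.1
        subst hq
        rw [edges_arc_cons hn h hab, Walk.edges_cons, Walk.edges_nil, edges_arc]
        rw [sub_self, val_zero']
        simp [edgeAt]
      · have hq : q.edges = (arc h (a+1) b).edges := by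
          apply ih hb q (by simpa using hlen) hp.1
          intro hmem
          apply hp.2
          have h1 : a + 1 - 1 = a := by ring
          rw [h1] at hmem
          exact List.mem_of_mem_tail hmem
        rw [Walk.edges_cons, hq, edges_arc_cons hn h hab]
        rfl
    · exfalso
      subst hc
      apply hav
      rw [Walk.support_cons]
      exact q.start_mem_support

include hn in
lemma classify (h : Good G σ) {a b : Fin n} (hab : a ≠ b)
    (p : G.Walk (σ a) (σ b)) (hp : p.IsPath) :
    p.edges = (arc h a b).edges ∨ p.edges = (arc h.neg (-a) (-b)).edges := by
  obtain ⟨c, hadjc, q, rfl⟩ := Walk.exists_eq_cons_of_ne (fun hh => hab (h.inj hh)) p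
  rw [Walk.cons_isPath_iff] at hp
  rcases (h.adj a c).1 hadjc with hc | hc
  · left
    subst hc
    by_cases hb : a + 1 = b
    · subst hb
      have hq : q = Walk.nil := (Walk.isPath_iff_eq_nil (p := q)).1 hp.1
      subst hq
      rw [edges_arc_cons hn h hab, Walk.edges_cons, Walk.edges_nil, edges_arc]
      rw [sub_self, val_zero']
      simp [edgeAt]
    · rw [Walk.edges_cons,
        eq_arc_edges_of_avoid hn h q.length hb q le_rfl hp.1 ?av,
        edges_arc_cons hn h hab]
      · rfl
      case av =>
        intro hmem
        apply hp.2
        have h1 : a + 1 - 1 = a := by ring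
        rw [h1] at hmem
        exact List.mem_of_mem_tail hmem
  · right
    subst hc
    have hgn := h.neg
    have enn : ∀ x : Fin n, nsig σ (-x) = σ x := by
      intro x; show σ (- -x) = σ x; congr 1; ring
    have hmab : (-a : Fin n) ≠ -b := fun hh => hab (by
      have := congrArg Neg.neg hh; simpa using this)
    by_cases hb : b = a - 1
    · subst hb
      have hq : q = Walk.nil := (Walk.isPath_iff_eq_nil (p := q)).1 hp.1
      subst hq
      rw [Walk.edges_cons, Walk.edges_nil, edges_arc]
      have h1 : (-(a-1) : Fin n) - -a = 1 := by ring
      rw [h1, val_one3 hn]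
      simp only [List.range_succ, List.range_zero, List.map_nil, List.nil_append, List.map_cons,
        List.map_nil, Nat.cast_zero, add_zero]
      show [s(σ a, σ (a-1))] = [s(nsig σ (-a), nsig σ (-a + 1))]
      have e3 : nsig σ (-a) = σ a := enn a
      have e4 : nsig σ (-a + 1) = σ (a - 1) := by
        show σ (-(-a+1)) = σ (a-1); congr 1; ring
      rw [e3, e4]
    · have hab' : (-a : Fin n) + 1 ≠ -b := by
        intro hx
        apply hb
        have h2 : (-(-a+1) : Fin n) = - -b := congrArg Neg.neg hx
        simp only [neg_neg] at h2
        rw [← h2]; ring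
      have e1 : σ (a-1) = nsig σ (-a + 1) := by
        show _ = σ (-(-a+1)); congr 1; ring
      have e2 : σ b = nsig σ (-b) := (enn b).symm
      have hq' : (q.copy e1 e2).edges = (arc hgn (-a+1) (-b)).edges := by
        apply eq_arc_edges_of_avoid hn hgn (q.copy e1 e2).length hab' _ le_rfl
          ((Walk.isPath_copy _ _ _).2 hp.1)
        rw [Walk.support_copy]
        intro hmem
        apply hp.2
        have h1 : nsig σ (-a + 1 - 1) = σ a := by
          show σ (-(-a+1-1)) = σ a; congr 1; ring
        rw [h1] at hmem
        exact List.mem_of_mem_tail hmem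
      rw [Walk.edges_cons]
      rw [Walk.edges_copy] at hq'
      rw [hq', edges_arc_cons hn hgn hmab]
      congr 1
      show s(σ a, σ (a-1)) = s(nsig σ (-a), nsig σ (-a + 1))
      have e3 : nsig σ (-a) = σ a := enn a
      have e4 : nsig σ (-a + 1) = σ (a - 1) := by
        show σ (-(-a+1)) = σ (a-1); congr 1; ring
      rw [e3, e4]

include hn in
lemma weight_down (h : Good G σ) (w : Sym2 (Fin n) → ℝ) {a b : Fin n} (hab : a ≠ b) :
    walkWeight G w (arc h.neg (-a) (-b)) = ∑ i ∈ arcSet b a, w (edgeAt σ i) := by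
  rw [weight_arc h.neg w]
  refine Finset.sum_nbij' (fun j => -j - 1) (fun x => -x - 1) ?_ ?_ ?_ ?_ ?_
  · intro j hj
    exact (mem_arcSet_neg hn hab).1 hj
  · intro x hx
    apply (mem_arcSet_neg hn hab).2
    have e : (-(-x-1) : Fin n) - 1 = x := by ring
    rwa [e]
  · intro j _; ring
  · intro x _; ring
  · intro j _
    rw [edgeAt_nsig]

include hn in
lemma wdist_eq (h : Good G σ) (w : Sym2 (Fin n) → ℝ) {a b : Fin n} (hab : a ≠ b) :
    wdist G w (σ a) (σ b) =
      min (∑ i ∈ arcSet a b, w (edgeAt σ i)) (∑ i ∈ arcSet b a, w (edgeAt σ i)) := by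
  have enn : ∀ x : Fin n, nsig σ (-x) = σ x := by
    intro x; show σ (- -x) = σ x; congr 1; ring
  have hset : {x : ℝ | ∃ p : G.Walk (σ a) (σ b), p.IsPath ∧ walkWeight G w p = x}
      = {∑ i ∈ arcSet a b, w (edgeAt σ i), ∑ i ∈ arcSet b a, w (edgeAt σ i)} := by
    ext x
    constructor
    · rintro ⟨p, hp, rfl⟩
      rcases classify hn h hab p hp with he | he
      · left
        show walkWeight G w p = _
        rw [walkWeight, he, ← weight_arc h w a b]
        rfl
      · right
        show walkWeight G w p = _
        rw [walkWeight, he]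
        rw [← weight_down hn h w hab]
        rfl
    · rintro (rfl | rfl)
      · exact ⟨arc h a b, isPath_arc h a b, weight_arc h w a b⟩
      · refine ⟨(arc h.neg (-a) (-b)).copy (enn a) (enn b), ?_, ?_⟩
        · rw [Walk.isPath_copy]; exact isPath_arc _ _ _
        · show ((((arc h.neg (-a) (-b)).copy (enn a) (enn b))).edges.map w).sum = _
          rw [Walk.edges_copy]
          rw [← weight_down hn h w hab]
          rfl
  rw [wdist, hset, csInf_pair]

-- ### helper lemmas for main proof

include hn in
lemma add_two_ne (a : Fin n) : a + 1 + 1 ≠ a := by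
  intro h
  apply two_ne_zero3 hn
  linear_combination h

include hn in
lemma edgeAt_inj (hσ : Function.Injective σ) {i j : Fin n} (hij : edgeAt σ i = edgeAt σ j) :
    i = j := by
  rw [edgeAt, edgeAt, Sym2.eq_iff] at hij
  rcases hij with ⟨h1, _⟩ | ⟨h1, h2⟩
  · exact hσ h1
  · exfalso
    have e1 : i = j + 1 := hσ h1
    have e2 : i + 1 = j := hσ h2
    apply two_ne_zero3 hn
    linear_combination e2 - e1

include hn in
lemma mem_edges_arc (h : Good G σ) {a b j : Fin n} :
    edgeAt σ j ∈ (arc h a b).edges ↔ j ∈ arcSet a b := by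
  rw [edges_arc, List.mem_map]
  constructor
  · rintro ⟨i, hi, he⟩
    rw [List.mem_range] at hi
    have := edgeAt_inj hn h.inj he
    rw [← this]
    exact Finset.mem_image.2 ⟨i, Finset.mem_range.2 hi, rfl⟩
  · intro hj
    obtain ⟨i, hi, rfl⟩ := Finset.mem_image.1 hj
    exact ⟨i, List.mem_range.2 (Finset.mem_range.1 hi), rfl⟩

include hn in
lemma mem_edges_arc_down (h : Good G σ) {a b j : Fin n} (hab : a ≠ b) :
    edgeAt σ j ∈ (arc h.neg (-a) (-b)).edges ↔ j ∈ arcSet b a := by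
  have e : edgeAt σ j = edgeAt (nsig σ) (-j-1) := by
    rw [edgeAt_nsig]; congr 1; ring
  rw [e, mem_edges_arc hn h.neg, mem_arcSet_neg hn hab]
  have e2 : (-(-j-1) : Fin n) - 1 = j := by ring
  rw [e2]

include hn in
lemma sum_compl_arc {a b : Fin n} (hab : a ≠ b) (f : Fin n → ℝ) :
    ∑ i ∈ arcSet a b, f i + ∑ i ∈ arcSet b a, f i = ∑ i, f i := by
  rw [← arcSet_compl hn hab, Finset.sum_sdiff_eq_sub (Finset.subset_univ _)]
  ring

lemma walkWeight_copy (w : Sym2 (Fin n) → ℝ) {u v u' v' : Fin n} (p : G.Walk u v)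
    (hu : u = u') (hv : v = v') :
    walkWeight G w (p.copy hu hv) = walkWeight G w p := by
  rw [walkWeight, walkWeight, Walk.edges_copy]

include hn in
lemma good_of_edgeSet {P : SimpleGraph (Fin n)} (σ : Equiv.Perm (Fin n))
    (hedge : P.edgeSet = Set.range (fun i : Fin n => s(σ i, σ (i+1)))) : Good P ⇑σ where
  inj := σ.injective
  adj := by
    intro a c
    rw [← SimpleGraph.mem_edgeSet, hedge]
    constructor
    · rintro ⟨i, hi⟩
      simp only [Sym2.eq_iff] at hi
      rcases hi with ⟨h1, h2⟩ | ⟨h1, h2⟩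
      · left; rw [← h2, σ.injective h1]
      · right; rw [← h1]
        congr 1
        have : i + 1 = a := σ.injective h2
        linear_combination this
    · rintro (rfl | rfl)
      · exact ⟨a, rfl⟩
      · refine ⟨a - 1, ?_⟩
        show s(σ (a-1), σ (a-1+1)) = _
        have e : a - 1 + 1 = a := by ring
        rw [e, Sym2.eq_swap]

lemma findec_symm {D : Fin n → Fin n → ℝ} (hsym : ∀ i j, D i j = D j i)
    {i j : Fin n} (h : FIndec D i j) : FIndec D j i := by
  intro z hz1 hz2
  have := h z hz2 hz1
  rw [hsym j i, hsym j z, hsym z i]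
  linarith

include hn in
lemma sub_one_add_one (a : Fin n) : a - 1 + 1 = a := by ring

include hn in
lemma ne_sub_one (a : Fin n) : a ≠ a - 1 := by
  intro h
  apply one_ne_zero3 hn
  linear_combination h

include hn in
lemma add_one_ne_sub_one (a : Fin n) : a + 1 ≠ a - 1 := by
  intro h
  apply two_ne_zero3 hn
  linear_combination h

-- ### the construction direction

omit hn in
include hn in
lemma construct (D : Fin n → Fin n → ℝ)
    (hsym : ∀ i j, D i j = D j i) (hpos : ∀ i j : Fin n, i ≠ j → 0 < D i j)
    (σ : Equiv.Perm (Fin n))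
    (hindec : ∀ i : Fin n, FIndec D (σ i) (σ (i + 1)))
    (hmin : ∀ a b : Fin n, a < b → D (σ a) (σ b) =
      min (∑ i ∈ Finset.Ico a b, D (σ i) (σ (i + 1)))
          (∑ i ∈ Finset.univ \ Finset.Ico a b, D (σ i) (σ (i + 1)))) :
    ∃ (P : SimpleGraph (Fin n)) (w : Sym2 (Fin n) → ℝ), IsPolygon P ∧ PosWeights P w ∧
      Pruned P w ∧ ∀ i j : Fin n, i ≠ j → wdist P w i j = D i j := by
  set P : SimpleGraph (Fin n) :=
    SimpleGraph.fromEdgeSet (Set.range (fun i : Fin n => s(σ i, σ (i+1)))) with hP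
  set w : Sym2 (Fin n) → ℝ := Sym2.lift ⟨D, fun x y => hsym x y⟩ with hw
  have hedge : P.edgeSet = Set.range (fun i : Fin n => s(σ i, σ (i+1))) := by
    rw [hP, SimpleGraph.edgeSet_fromEdgeSet]
    rw [sdiff_eq_left.2 (Set.disjoint_left.2 ?_)]
    intro e he hd
    obtain ⟨i, rfl⟩ := he
    simp only [Set.mem_setOf_eq, Sym2.isDiag_iff_proj_eq] at hd
    exact add_one_ne hn i (σ.injective hd.symm)
  have good : Good P ⇑σ := good_of_edgeSet hn σ hedge
  have hWD : ∀ i : Fin n, w (edgeAt (⇑σ) i) = D (σ i) (σ (i+1)) := by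
    intro i; rw [hw, edgeAt, Sym2.lift_mk]
  -- S-sums equal D-sums
  have hSum : ∀ s : Finset (Fin n),
      ∑ i ∈ s, w (edgeAt (⇑σ) i) = ∑ i ∈ s, D (σ i) (σ (i+1)) :=
    fun s => Finset.sum_congr rfl (fun i _ => hWD i)
  -- the distance formula for D
  have hD : ∀ a b : Fin n, a ≠ b → D (σ a) (σ b) =
      min (∑ i ∈ arcSet a b, w (edgeAt (⇑σ) i)) (∑ i ∈ arcSet b a, w (edgeAt (⇑σ) i)) := by
    intro a b hab
    rcases lt_trichotomy a b with hlt | heq | hlt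
    · rw [hSum, hSum, arcSet_eq_Ico hlt, show arcSet b a = Finset.univ \ Finset.Ico a b from
        by rw [← arcSet_compl hn hab, arcSet_eq_Ico hlt]]
      exact hmin a b hlt
    · exact absurd heq hab
    · rw [hSum, hSum, arcSet_eq_Ico hlt, show arcSet a b = Finset.univ \ Finset.Ico b a from
        by rw [← arcSet_compl hn (Ne.symm hab), arcSet_eq_Ico hlt], min_comm, hsym]
      exact hmin b a hlt
  -- wdist = D
  have hwdist : ∀ a b : Fin n, a ≠ b → wdist P w (σ a) (σ b) = D (σ a) (σ b) := by
    intro a b hab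
    rw [wdist_eq hn good w hab, hD a b hab]
  -- key : each edge weight is less than the complementary arc
  have key : ∀ i : Fin n,
      ∑ j ∈ arcSet i (i+1), w (edgeAt (⇑σ) j) < ∑ j ∈ arcSet (i+1) i, w (edgeAt (⇑σ) j) := by
    intro i
    have hsing : ∑ j ∈ arcSet i (i+1), w (edgeAt (⇑σ) j) = w (edgeAt (⇑σ) i) := by
      rw [arcSet_singleton hn i, Finset.sum_singleton]
    have hne2 : σ (i+1+1) ≠ σ i := fun hh => add_two_ne hn i (σ.injective hh)
    have hne3 : σ (i+1+1) ≠ σ (i+1) := fun hh => add_one_ne hn (i+1) (σ.injective hh)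
    have hid := hindec i (σ (i+1+1)) hne2 hne3
    -- D (σ i) (σ (i+1+1)) ≤ S (i+1+1) i
    have hb1 : D (σ i) (σ (i+1+1)) ≤ ∑ j ∈ arcSet (i+1+1) i, w (edgeAt (⇑σ) j) := by
      rw [hD i (i+1+1) (Ne.symm (add_two_ne hn i))]
      exact min_le_right _ _
    have hb2 : D (σ (i+1+1)) (σ (i+1)) = w (edgeAt (⇑σ) (i+1)) := by
      rw [hsym, hWD]
    -- concat : S (i+1) i = W (i+1) + S (i+1+1) i
    have hconcat : ∑ j ∈ arcSet (i+1) i, w (edgeAt (⇑σ) j)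
        = w (edgeAt (⇑σ) (i+1)) + ∑ j ∈ arcSet (i+1+1) i, w (edgeAt (⇑σ) j) := by
      have hcond : ((i+1+1) - (i+1)).val + (i - (i+1+1)).val = (i - (i+1)).val := by
        have e1 : (i+1+1) - (i+1) = 1 := by ring
        have e2 : i - (i+1+1) = -(1+1) := by ring
        have e3 : i - (i+1) = -1 := by ring
        have e4 : (1 + 1 : Fin n) = 2 := by norm_num
        rw [e1, e2, e3, e4, val_one3 hn, neg_val hn (two_ne_zero3 hn),
          neg_val hn (one_ne_zero3 hn), val_two3 hn, val_one3 hn]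
        omega
      rw [sum_concat _ hcond]
      congr 1
      rw [show arcSet (i+1) (i+1+1) = {i+1} from arcSet_singleton hn (i+1), Finset.sum_singleton]
    rw [hsing, hconcat]
    calc w (edgeAt (⇑σ) i) = D (σ i) (σ (i+1)) := hWD i
      _ < D (σ i) (σ (i+1+1)) + D (σ (i+1+1)) (σ (i+1)) := hid
      _ ≤ _ := by rw [hb2]; linarith [hb1]
  refine ⟨P, w, ⟨σ, hedge⟩, ?_, ?_, ?_⟩
  · -- PosWeights
    intro e he
    rw [hedge] at he
    obtain ⟨i, rfl⟩ := he
    show 0 < w (edgeAt (⇑σ) i)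
    rw [hWD]
    exact hpos _ _ (fun hh => add_one_ne hn i (σ.injective hh.symm))
  · -- Pruned
    intro e he
    rw [hedge] at he
    obtain ⟨i, rfl⟩ := he
    refine ⟨σ i, σ (i+1), fun hh => add_one_ne hn i (σ.injective hh.symm), ?_⟩
    intro p hreal
    have hwd' : wdist P w (σ i) (σ (i+1)) = w (edgeAt (⇑σ) i) := by
      rw [wdist_eq hn good w (Ne.symm (add_one_ne hn i))]
      rw [min_eq_left]
      · rw [arcSet_singleton hn i, Finset.sum_singleton]
      · rw [arcSet_singleton hn i, Finset.sum_singleton]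
        exact le_of_lt (by
          have := key i
          rwa [arcSet_singleton hn i, Finset.sum_singleton] at this)
    rcases classify hn good (Ne.symm (add_one_ne hn i)) p hreal.1 with he | he
    · show (fun i : Fin n => s(σ i, σ (i+1))) i ∈ p.edges
      rw [he]
      exact (mem_edges_arc hn good).2 (self_mem_arcSet (Ne.symm (add_one_ne hn i)))
    · exfalso
      have hwt : walkWeight P w p = ∑ j ∈ arcSet (i+1) i, w (edgeAt (⇑σ) j) := by
        rw [walkWeight, he, ← weight_down hn good w (Ne.symm (add_one_ne hn i))]
        rfl
      have h1 := hreal.2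
      rw [hwt, hwd'] at h1
      have := key i
      rw [arcSet_singleton hn i, Finset.sum_singleton] at this
      linarith
  · -- distances
    intro i j hij
    have hi : σ (σ.symm i) = i := σ.apply_symm_apply i
    have hj : σ (σ.symm j) = j := σ.apply_symm_apply j
    rw [← hi, ← hj]
    exact hwdist _ _ (fun hh => hij (by rw [← hi, ← hj, hh]))

-- ### the necessity direction

include hn in
lemma necessary (D : Fin n → Fin n → ℝ)
    (hsym : ∀ i j, D i j = D j i)
    (P : SimpleGraph (Fin n)) (w : Sym2 (Fin n) → ℝ)
    (σ : Equiv.Perm (Fin n))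
    (hedge : P.edgeSet = Set.range (fun i : Fin n => s(σ i, σ (i + 1))))
    (hposw : PosWeights P w) (hpruned : Pruned P w)
    (hwd : ∀ i j : Fin n, i ≠ j → wdist P w i j = D i j) :
    (∀ i : Fin n, {x : Fin n | x ≠ i ∧ FIndec D i x}.ncard = 2) ∧
      (∀ i : Fin n, FIndec D (σ i) (σ (i + 1))) ∧
      ∀ a b : Fin n, a < b →
        D (σ a) (σ b) =
          min (∑ i ∈ Finset.Ico a b, D (σ i) (σ (i + 1)))
            (∑ i ∈ Finset.univ \ Finset.Ico a b, D (σ i) (σ (i + 1))) := by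
  have good : Good P ⇑σ := good_of_edgeSet hn σ hedge
  have sne : ∀ {x y : Fin n}, x ≠ y → σ x ≠ σ y := fun hxy hh => hxy (σ.injective hh)
  have hWpos : ∀ i : Fin n, 0 < w (edgeAt (⇑σ) i) := fun i =>
    hposw _ (by rw [hedge]; exact ⟨i, rfl⟩)
  have hne1 : ∀ i : Fin n, i ≠ i + 1 := fun i => Ne.symm (add_one_ne hn i)
  have hS1 : ∀ i : Fin n,
      ∑ j ∈ arcSet i (i+1), w (edgeAt (⇑σ) j) = w (edgeAt (⇑σ) i) := fun i => by
    rw [arcSet_singleton hn i, Finset.sum_singleton]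
  -- Step 1 : each edge weight is strictly less than the complementary arc
  have key : ∀ i : Fin n,
      w (edgeAt (⇑σ) i) < ∑ j ∈ arcSet (i+1) i, w (edgeAt (⇑σ) j) := by
    intro i
    by_contra hge
    push_neg at hge
    obtain ⟨a, b, hab, hforce⟩ := hpruned (edgeAt (⇑σ) i) (by rw [hedge]; exact ⟨i, rfl⟩)
    obtain ⟨a', rfl⟩ : ∃ y, σ y = a := ⟨σ.symm a, σ.apply_symm_apply a⟩
    obtain ⟨b', rfl⟩ : ∃ y, σ y = b := ⟨σ.symm b, σ.apply_symm_apply b⟩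
    have hab' : a' ≠ b' := fun hh => hab (by rw [hh])
    have hT : ∑ j ∈ arcSet a' b', w (edgeAt (⇑σ) j) + ∑ j ∈ arcSet b' a', w (edgeAt (⇑σ) j)
        = ∑ j, w (edgeAt (⇑σ) j) := sum_compl_arc hn hab' _
    have hTi : w (edgeAt (⇑σ) i) + ∑ j ∈ arcSet (i+1) i, w (edgeAt (⇑σ) j)
        = ∑ j, w (edgeAt (⇑σ) j) := by
      rw [← hS1 i]; exact sum_compl_arc hn (hne1 i) _
    have enn : ∀ x : Fin n, nsig (⇑σ) (-x) = σ x := fun x => by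
      show σ (- -x) = σ x; congr 1; ring
    by_cases hi : i ∈ arcSet a' b'
    · have h1 : w (edgeAt (⇑σ) i) ≤ ∑ j ∈ arcSet a' b', w (edgeAt (⇑σ) j) :=
        Finset.single_le_sum (fun j _ => le_of_lt (hWpos j)) hi
      have h2 : ∑ j ∈ arcSet b' a', w (edgeAt (⇑σ) j)
          ≤ ∑ j ∈ arcSet a' b', w (edgeAt (⇑σ) j) := by linarith
      have hreal : Realizes P w ((arc good.neg (-a') (-b')).copy (enn a') (enn b')) := by
        constructor
        · rw [Walk.isPath_copy]; exact isPath_arc _ _ _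
        · rw [walkWeight_copy, weight_down hn good w hab', wdist_eq hn good w hab']
          exact (min_eq_right h2).symm
      have hforced := hforce _ hreal
      rw [Walk.edges_copy] at hforced
      have hmem : i ∈ arcSet b' a' := (mem_edges_arc_down hn good hab').1 hforced
      rw [← arcSet_compl hn hab'] at hmem
      exact (Finset.mem_sdiff.1 hmem).2 hi
    · have hmem : i ∈ arcSet b' a' := by
        rw [← arcSet_compl hn hab']
        exact Finset.mem_sdiff.2 ⟨Finset.mem_univ i, hi⟩
      have h1 : w (edgeAt (⇑σ) i) ≤ ∑ j ∈ arcSet b' a', w (edgeAt (⇑σ) j) :=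
        Finset.single_le_sum (fun j _ => le_of_lt (hWpos j)) hmem
      have h2 : ∑ j ∈ arcSet a' b', w (edgeAt (⇑σ) j)
          ≤ ∑ j ∈ arcSet b' a', w (edgeAt (⇑σ) j) := by linarith
      have hreal : Realizes P w (arc good a' b') := by
        constructor
        · exact isPath_arc _ _ _
        · rw [weight_arc good w, wdist_eq hn good w hab']
          exact (min_eq_left h2).symm
      have hforced := hforce _ hreal
      exact hi ((mem_edges_arc hn good).1 hforced)
  -- Step 2 : adjacent distances are edge weights
  have hW : ∀ i : Fin n, D (σ i) (σ (i+1)) = w (edgeAt (⇑σ) i) := by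
    intro i
    rw [← hwd _ _ (sne (hne1 i)), wdist_eq hn good w (hne1 i), hS1 i]
    exact min_eq_left (le_of_lt (key i))
  -- distance formula
  have hdf : ∀ {x y : Fin n}, x ≠ y → D (σ x) (σ y) =
      min (∑ j ∈ arcSet x y, w (edgeAt (⇑σ) j)) (∑ j ∈ arcSet y x, w (edgeAt (⇑σ) j)) := by
    intro x y hxy
    rw [← hwd _ _ (sne hxy), wdist_eq hn good w hxy]
  -- Step 3 : adjacent pairs are indecomposable
  have hadjindec : ∀ i : Fin n, FIndec D (σ i) (σ (i + 1)) := by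
    intro i z hz1 hz2
    obtain ⟨c, rfl⟩ : ∃ y, σ y = z := ⟨σ.symm z, σ.apply_symm_apply z⟩
    have hci : c ≠ i := fun hh => hz1 (by rw [hh])
    have hci1 : c ≠ i + 1 := fun hh => hz2 (by rw [hh])
    rw [hW i, hdf (Ne.symm hci), hdf hci1]
    have l1 : w (edgeAt (⇑σ) i) ≤ ∑ j ∈ arcSet i c, w (edgeAt (⇑σ) j) :=
      Finset.single_le_sum (fun j _ => le_of_lt (hWpos j)) (self_mem_arcSet (Ne.symm hci))
    rcases min_cases (∑ j ∈ arcSet i c, w (edgeAt (⇑σ) j))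
        (∑ j ∈ arcSet c i, w (edgeAt (⇑σ) j)) with ⟨he1, hc1⟩ | ⟨he1, hc1⟩ <;>
      rcases min_cases (∑ j ∈ arcSet c (i+1), w (edgeAt (⇑σ) j))
        (∑ j ∈ arcSet (i+1) c, w (edgeAt (⇑σ) j)) with ⟨he2, hc2⟩ | ⟨he2, hc2⟩ <;>
      rw [he1, he2]
    · have l2 : 0 < ∑ j ∈ arcSet c (i+1), w (edgeAt (⇑σ) j) :=
        Finset.sum_pos (fun j _ => hWpos j) ⟨c, self_mem_arcSet hci1⟩
      linarith
    · have l2 : 0 < ∑ j ∈ arcSet (i+1) c, w (edgeAt (⇑σ) j) :=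
        Finset.sum_pos (fun j _ => hWpos j) ⟨i+1, self_mem_arcSet (Ne.symm hci1)⟩
      linarith
    · -- S c i + S c (i+1) ; use S c (i+1) = S c i + W i
      have hcond : ((i - c).val + ((i+1) - i).val = ((i+1) - c).val) := by
        have e1 : (i+1) - i = 1 := by ring
        have e2 : (i+1) - c = (i - c) + 1 := by ring
        have hne0 : (i - c) + 1 ≠ 0 := by
          rw [← e2]; intro hh
          exact hci1 (by linear_combination -hh)
        rw [e1, e2, val_one3 hn, val_add_one hn hne0]
      have hsplit := sum_concat (fun j => w (edgeAt (⇑σ) j)) hcond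
      rw [hS1 i] at hsplit
      have l3 : 0 < ∑ j ∈ arcSet c i, w (edgeAt (⇑σ) j) :=
        Finset.sum_pos (fun j _ => hWpos j) ⟨c, self_mem_arcSet hci⟩
      linarith
    · -- S c i + S (i+1) c = S (i+1) i > W i
      have hcond : ((c - (i+1)).val + (i - c).val = (i - (i+1)).val) := by
        have e1 : i - (i+1) = -1 := by ring
        have e2 : c - (i+1) = (c - i) - 1 := by ring
        have e3 : i - c = -(c - i) := by ring
        have hne0 : c - i ≠ 0 := sub_ne_zero.2 hci
        have h4 := fin_val_ne_zero hne0
        have h5 := (c - i).isLt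
        rw [e1, e2, e3, sub_one_val hn hne0, neg_val hn hne0,
          neg_val hn (one_ne_zero3 hn), val_one3 hn]
        omega
      have hsplit := sum_concat (fun j => w (edgeAt (⇑σ) j)) hcond
      have := key i
      linarith
  -- Step 4 : the formula
  have hform : ∀ a b : Fin n, a < b →
      D (σ a) (σ b) =
        min (∑ i ∈ Finset.Ico a b, D (σ i) (σ (i + 1)))
          (∑ i ∈ Finset.univ \ Finset.Ico a b, D (σ i) (σ (i + 1))) := by
    intro a b hab
    have hne : a ≠ b := ne_of_lt hab
    rw [hdf hne, arcSet_eq_Ico hab,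
      show arcSet b a = Finset.univ \ Finset.Ico a b from
        by rw [← arcSet_compl hn hne, arcSet_eq_Ico hab]]
    congr 1 <;> exact Finset.sum_congr rfl (fun j _ => (hW j).symm)
  refine ⟨?_, hadjindec, hform⟩
  -- Step 5 : exactly two indecomposable partners
  intro i0
  obtain ⟨a, rfl⟩ : ∃ y, σ y = i0 := ⟨σ.symm i0, σ.apply_symm_apply i0⟩
  have hseteq : {x : Fin n | x ≠ σ a ∧ FIndec D (σ a) x} = {σ (a+1), σ (a-1)} := by
    ext x
    simp only [Set.mem_setOf_eq, Set.mem_insert_iff, Set.mem_singleton_iff]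
    constructor
    · rintro ⟨hx1, hx2⟩
      obtain ⟨c, rfl⟩ : ∃ y, σ y = x := ⟨σ.symm x, σ.apply_symm_apply x⟩
      have hca : c ≠ a := fun hh => hx1 (by rw [hh])
      by_contra hcon
      push_neg at hcon
      obtain ⟨hc1, hc2⟩ := hcon
      have hca1 : c ≠ a + 1 := fun hh => hc1 (by rw [hh])
      have hca2 : c ≠ a - 1 := fun hh => hc2 (by rw [hh])
      rcases le_or_gt (∑ j ∈ arcSet a c, w (edgeAt (⇑σ) j))
          (∑ j ∈ arcSet c a, w (edgeAt (⇑σ) j)) with hle | hlt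
      · have hz := hx2 (σ (a+1)) (sne (Ne.symm (hne1 a))) (sne (fun hh => hca1 hh.symm))
        have hd0 : D (σ a) (σ c) = ∑ j ∈ arcSet a c, w (edgeAt (⇑σ) j) := by
          rw [hdf (Ne.symm hca)]; exact min_eq_left hle
        have hd2 : D (σ (a+1)) (σ c) ≤ ∑ j ∈ arcSet (a+1) c, w (edgeAt (⇑σ) j) := by
          rw [hdf (fun hh => hca1 hh.symm)]; exact min_le_left _ _
        have hcond : (((a+1) - a).val + (c - (a+1)).val = (c - a).val) := by
          have e1 : (a+1) - a = 1 := by ring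
          have e2 : c - (a+1) = (c - a) - 1 := by ring
          have hne0 : c - a ≠ 0 := sub_ne_zero.2 hca
          have h4 := fin_val_ne_zero hne0
          rw [e1, e2, val_one3 hn, sub_one_val hn hne0]
          omega
        have hsplit := sum_concat (fun j => w (edgeAt (⇑σ) j)) hcond
        rw [hS1 a] at hsplit
        rw [hd0, hW a] at hz
        linarith
      · have hz := hx2 (σ (a-1)) (sne (fun hh => ne_sub_one hn a hh.symm))
          (sne (fun hh => hca2 hh.symm))
        have hd0 : D (σ a) (σ c) = ∑ j ∈ arcSet c a, w (edgeAt (⇑σ) j) := by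
          rw [hdf (Ne.symm hca)]; exact min_eq_right (le_of_lt hlt)
        have hd1 : D (σ a) (σ (a-1)) = w (edgeAt (⇑σ) (a-1)) := by
          rw [hsym]
          have h0 := hW (a-1)
          rwa [sub_one_add_one hn a] at h0
        have hd2 : D (σ (a-1)) (σ c) ≤ ∑ j ∈ arcSet c (a-1), w (edgeAt (⇑σ) j) := by
          rw [hdf (fun hh => hca2 hh.symm)]; exact min_le_right _ _
        have hcond : (((a-1) - c).val + (a - (a-1)).val = (a - c).val) := by
          have e1 : a - (a-1) = 1 := by ring
          have e2 : (a-1) - c = (a - c) - 1 := by ring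
          have hne0 : a - c ≠ 0 := sub_ne_zero.2 (Ne.symm hca)
          have h4 := fin_val_ne_zero hne0
          rw [e1, e2, val_one3 hn, sub_one_val hn hne0]
          omega
        have hsplit := sum_concat (fun j => w (edgeAt (⇑σ) j)) hcond
        have hsing : ∑ j ∈ arcSet (a-1) a, w (edgeAt (⇑σ) j) = w (edgeAt (⇑σ) (a-1)) := by
          have e := arcSet_singleton hn (a-1)
          rw [sub_one_add_one hn a] at e
          rw [e, Finset.sum_singleton]
        rw [hsing] at hsplit
        rw [hd0, hd1] at hz
        linarith
    · rintro (rfl | rfl)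
      · exact ⟨sne (Ne.symm (hne1 a)), hadjindec a⟩
      · refine ⟨sne (fun hh => ne_sub_one hn a hh.symm), ?_⟩
        have h0 := hadjindec (a-1)
        rw [sub_one_add_one hn a] at h0
        exact findec_symm hsym h0
  rw [hseteq]
  exact Set.ncard_pair (sne (add_one_ne_sub_one hn a))

end Stmt7

/-- Characterization of families realized by a pruned positive-weighted polygon. -/
theorem stmt_7 {n : ℕ} [NeZero n] (hn : 3 ≤ n) (D : Fin n → Fin n → ℝ)
    (hsym : ∀ i j, D i j = D j i) (hpos : ∀ i j : Fin n, i ≠ j → 0 < D i j)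
    (htri : TriangleIneq D) :
    (∃ (P : SimpleGraph (Fin n)) (w : Sym2 (Fin n) → ℝ), IsPolygon P ∧ PosWeights P w ∧
        Pruned P w ∧ ∀ i j : Fin n, i ≠ j → wdist P w i j = D i j) ↔
      ((∀ i : Fin n, {x : Fin n | x ≠ i ∧ FIndec D i x}.ncard = 2) ∧
        ∃ σ : Equiv.Perm (Fin n),
          (∀ i : Fin n, FIndec D (σ i) (σ (i + 1))) ∧
          ∀ a b : Fin n, a < b →
            D (σ a) (σ b) =
              min (∑ i ∈ Finset.Ico a b, D (σ i) (σ (i + 1)))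
                (∑ i ∈ Finset.univ \ Finset.Ico a b, D (σ i) (σ (i + 1)))) := by
  classical
  constructor
  · rintro ⟨P, w, ⟨σ, hedge⟩, hposw, hpruned, hwd⟩
    obtain ⟨h1, h2, h3⟩ := Stmt7.necessary hn D hsym P w σ hedge hposw hpruned hwd
    exact ⟨h1, σ, h2, h3⟩
  · rintro ⟨-, σ, h2, h3⟩
    exact Stmt7.construct hn D hsym hpos σ h2 h3
end
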